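/- Let F be a real quadratic field with ring of integers O_F, embedded in ℝ² via the two real embeddings (v_0, v_1). For every x ∈ ℝ² and every 0 < δ < 1, there exist c, d ∈ O_F with c ≠ 0, ‖c·x + d‖ ≤ δ and ‖c‖ ≤ C_F/δ, where ‖(a_0,a_1)‖ = max(|a_0|,|a_1|), c·x = (v_0(c)x_0, v_1(c)x_1), d is embedded as (v_0(d), v_1(d)), and C_F is a constant depending only on F. -/

import Mathlib

/-!
Pick `θ ∈ 𝓞 F` with `v₀ θ ≠ v₁ θ`; then `ℤ + ℤθ ⊆ 𝓞 F` embeds as the full lattice spanned by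
`(1, 1)` and `(v₀ θ, v₁ θ)` in `ℝ²`. Dirichlet's box principle applies to the `(N + 1)²` points
`(i + jθ) · x`, `0 ≤ i, j ≤ N`: reducing their coordinates in this basis modulo `ℤ²` into `N²`
boxes of side `1 / N` gives two of them whose difference `c · x` with `c = i + jθ` lies within
`O(1 / N)` of the lattice, while `‖c‖ = O(N)`. Taking `N ≍ 1 / δ` gives the claim.
-/

open NumberField

theorem abs_sub_lt_one_div_of_floor_mul_eq {N a b : ℝ} (hN : 0 < N) (h : ⌊N * a⌋ = ⌊N * b⌋) :
    |a - b| < 1 / N := by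
  have := Int.abs_sub_lt_one_of_floor_eq_floor h
  rw [← mul_sub, abs_mul, abs_of_pos hN] at this
  rwa [lt_div_iff₀ hN, mul_comm]

theorem exists_ne_abs_fract_sub_lt {ι : Type*} [Fintype ι] (s t : ι → ℝ) {N : ℕ} (hN : 0 < N)
    (hcard : N ^ 2 < Fintype.card ι) :
    ∃ p q, p ≠ q ∧ |Int.fract (s p) - Int.fract (s q)| < 1 / N ∧
      |Int.fract (t p) - Int.fract (t q)| < 1 / N := by
  have hN' : (0 : ℝ) < N := by exact_mod_cast hN
  have box : ∀ u : ℝ, ⌊(N : ℝ) * Int.fract u⌋ ∈ Finset.Ico (0 : ℤ) N := fun u => by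
    rw [Finset.mem_Ico, Int.le_floor, Int.floor_lt]
    push_cast
    exact ⟨by positivity, mul_lt_of_lt_one_right hN' (Int.fract_lt_one u)⟩
  obtain ⟨p, -, q, -, hpq, hf⟩ := Finset.exists_ne_map_eq_of_card_lt_of_maps_to
    (s := Finset.univ) (t := Finset.Ico (0 : ℤ) N ×ˢ Finset.Ico (0 : ℤ) N)
    (f := fun p => (⌊(N : ℝ) * Int.fract (s p)⌋, ⌊(N : ℝ) * Int.fract (t p)⌋))
    (by simpa [sq] using hcard) (fun p _ => Finset.mem_product.2 ⟨box (s p), box (t p)⟩)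
  rw [Prod.mk.injEq] at hf
  exact ⟨p, q, hpq, abs_sub_lt_one_div_of_floor_mul_eq hN' hf.1,
    abs_sub_lt_one_div_of_floor_mul_eq hN' hf.2⟩

theorem exists_add_mul_eq_of_ne {K : Type*} [Field K] {V₀ V₁ : K} (hV : V₀ ≠ V₁) (y₀ y₁ : K) :
    ∃ s t : K, s + t * V₀ = y₀ ∧ s + t * V₁ = y₁ := by
  have := sub_ne_zero.2 hV
  refine ⟨y₀ - (y₀ - y₁) / (V₀ - V₁) * V₀, (y₀ - y₁) / (V₀ - V₁), by ring, ?_⟩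
  field_simp
  ring

theorem abs_add_mul_le {a b r : ℝ} (V : ℝ) (ha : |a| ≤ r) (hb : |b| ≤ r) :
    |a + b * V| ≤ r * (1 + |V|) :=
  calc |a + b * V| ≤ |a| + |b| * |V| := by rw [← abs_mul]; exact abs_add_le _ _
    _ ≤ r * (1 + |V|) := by nlinarith [abs_nonneg V]

theorem Fin.abs_val_sub_val_le {N : ℕ} (a b : Fin (N + 1)) : |((a : ℕ) - b : ℝ)| ≤ N := by
  have ha : ((a : ℕ) : ℝ) ≤ N := by exact_mod_cast Nat.lt_succ_iff.1 a.isLt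
  have hb : ((b : ℕ) : ℝ) ≤ N := by exact_mod_cast Nat.lt_succ_iff.1 b.isLt
  rw [abs_le]
  constructor <;> linarith [(b : ℕ).cast_nonneg (α := ℝ), (a : ℕ).cast_nonneg (α := ℝ)]

theorem exists_int_simultaneous_approx_of_ne {V₀ V₁ : ℝ} (hV : V₀ ≠ V₁) (x₀ x₁ : ℝ) {N : ℕ}
    (hN : 0 < N) :
    ∃ i j m n : ℤ, (i, j) ≠ (0, 0) ∧
      |i + j * V₀| ≤ N * (1 + |V₀|) ∧ |i + j * V₁| ≤ N * (1 + |V₁|) ∧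
      |(i + j * V₀) * x₀ + (m + n * V₀)| ≤ 1 / N * (1 + |V₀|) ∧
      |(i + j * V₁) * x₁ + (m + n * V₁)| ≤ 1 / N * (1 + |V₁|) := by
  choose s t hst using fun p : Fin (N + 1) × Fin (N + 1) =>
    exists_add_mul_eq_of_ne hV (((p.1 : ℕ) + (p.2 : ℕ) * V₀) * x₀)
      (((p.1 : ℕ) + (p.2 : ℕ) * V₁) * x₁)
  obtain ⟨p, q, hpq, hs, ht⟩ := exists_ne_abs_fract_sub_lt s t hN 
    (by simp only [Fintype.card_prod, Fintype.card_fin]; nlinarith)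
  have approx : ∀ V x : ℝ, (∀ p, s p + t p * V = ((p.1 : ℕ) + (p.2 : ℕ) * V) * x) →
      |(((p.1 : ℕ) - (q.1 : ℕ) : ℝ) + ((p.2 : ℕ) - (q.2 : ℕ)) * V) * x +
        (((⌊s q⌋ : ℝ) - ⌊s p⌋) + ((⌊t q⌋ : ℝ) - ⌊t p⌋) * V)| ≤ 1 / N * (1 + |V|) := by
    intro V x hV
    convert abs_add_mul_le V hs.le ht.le using 2
    simp only [Int.fract]
    linear_combination (hV q) - hV p
  refine ⟨(p.1 : ℕ) - (q.1 : ℕ), (p.2 : ℕ) - (q.2 : ℕ), ⌊s q⌋ - ⌊s p⌋, ⌊t q⌋ - ⌊t p⌋, ?_, ?_⟩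
  · contrapose! hpq
    simp only [Prod.mk.injEq, sub_eq_zero, Nat.cast_inj, Fin.val_inj] at hpq
    exact Prod.ext hpq.1 hpq.2
  push_cast
  exact ⟨abs_add_mul_le V₀ (Fin.abs_val_sub_val_le _ _) (Fin.abs_val_sub_val_le _ _),
    abs_add_mul_le V₁ (Fin.abs_val_sub_val_le _ _) (Fin.abs_val_sub_val_le _ _),
    approx V₀ x₀ fun p => (hst p).1, approx V₁ x₁ fun p => (hst p).2⟩

theorem exists_nat_div_le_of_le {A δ : ℝ} (hδ : 0 < δ) (hA : δ ≤ A) :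
    ∃ N : ℕ, 0 < N ∧ A / N ≤ δ ∧ (N : ℝ) ≤ 2 * A / δ := by
  have h1 : 1 ≤ A / δ := (one_le_div hδ).2 hA
  refine ⟨⌈A / δ⌉₊, Nat.ceil_pos.2 (by linarith), ?_, ?_⟩
  · rw [div_le_iff₀ (by positivity), ← div_le_iff₀' hδ]
    exact Nat.le_ceil _
  · calc (⌈A / δ⌉₊ : ℝ) ≤ A / δ + 1 := (Nat.ceil_lt_add_one (by linarith)).le
      _ ≤ 2 * A / δ := by rw [mul_div_assoc]; linarith

theorem intCast_add_intCast_mul_ne_zero {R K : Type*} [CommRing R] [Field K] [CharZero K]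
    {f g : R →+* K} {θ : R} (hθ : f θ ≠ g θ) {i j : ℤ} (hij : (i, j) ≠ (0, 0)) :
    (i : R) + j * θ ≠ 0 := by
  intro h
  have h₀ := congrArg f h
  have h₁ := congrArg g h
  simp only [map_add, map_mul, map_intCast, map_zero] at h₀ h₁
  have hj : (j : K) = 0 :=
    (mul_eq_zero.1 (by linear_combination h₀ - h₁ : (j : K) * (f θ - g θ) = 0)).resolve_right
      (sub_ne_zero.2 hθ)
  have hi : (i : K) = 0 := by simpa [hj] using h₀
  exact hij (by simp_all)

theorem NumberField.exists_ringOfIntegers_apply_ne {F R : Type*} [Field F] [NumberField F]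
    [Semiring R] {f g : F →+* R} (hfg : f ≠ g) : ∃ θ : 𝓞 F, f θ ≠ g θ := by
  by_contra! h
  exact hfg (IsLocalization.ringHom_ext (nonZeroDivisors (𝓞 F)) (RingHom.ext h))

theorem real_quadratic_simultaneous_approximation_general
    (F : Type*) [Field F] [NumberField F]
    (v₀ v₁ : F →+* ℝ) (hv : v₀ ≠ v₁) :
    ∃ C_F : ℝ, 0 < C_F ∧
      ∀ x : ℝ × ℝ, ∀ δ : ℝ, 0 < δ → δ < 1 →
        ∃ c d : 𝓞 F, c ≠ 0 ∧
          max |v₀ (c : F) * x.1 + v₀ (d : F)| |v₁ (c : F) * x.2 + v₁ (d : F)| ≤ δ ∧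
          max |v₀ (c : F)| |v₁ (c : F)| ≤ C_F / δ := by
  obtain ⟨θ, hθ⟩ := exists_ringOfIntegers_apply_ne hv
  set Θ := max |v₀ θ| |v₁ θ|
  have hΘ : 0 ≤ Θ := (abs_nonneg _).trans (le_max_left _ _)
  refine ⟨2 * (1 + Θ) ^ 2, by positivity, fun x δ hδ hδ1 => ?_⟩
  obtain ⟨N, hN, hNδ, hNle⟩ := exists_nat_div_le_of_le (A := 1 + Θ) hδ (by linarith)
  obtain ⟨i, j, m, n, hij, hc₀, hc₁, hd₀, hd₁⟩ :=
    exists_int_simultaneous_approx_of_ne hθ x.1 x.2 hN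
  have bound : ∀ V : ℝ, |V| ≤ Θ →
      1 / N * (1 + |V|) ≤ δ ∧ N * (1 + |V|) ≤ 2 * (1 + Θ) ^ 2 / δ := fun V hV => by
    have hN' : (0 : ℝ) < N := by exact_mod_cast hN
    constructor
    · calc 1 / N * (1 + |V|) ≤ 1 / N * (1 + Θ) := by gcongr
        _ = (1 + Θ) / N := by ring
        _ ≤ δ := hNδ
    · calc N * (1 + |V|) ≤ 2 * (1 + Θ) / δ * (1 + Θ) := by gcongr
        _ = 2 * (1 + Θ) ^ 2 / δ := by ring
  refine ⟨i + j * θ, m + n * θ, ?_, ?_, ?_⟩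
  · exact intCast_add_intCast_mul_ne_zero (f := v₀.comp (algebraMap (𝓞 F) F))
      (g := v₁.comp (algebraMap (𝓞 F) F)) hθ hij
  all_goals push_cast; simp only [map_add, map_mul, map_intCast]
  · exact max_le (hd₀.trans (bound _ (le_max_left _ _)).1)
      (hd₁.trans (bound _ (le_max_right _ _)).1)
  · exact max_le (hc₀.trans (bound _ (le_max_left _ _)).2)
      (hc₁.trans (bound _ (le_max_right _ _)).2)

/-- Simultaneous Diophantine approximation in a real quadratic field: there is
a constant `C_F`, depending only on `F`, such that for every `x ∈ ℝ²` and
every `0 < δ < 1` there are `c, d ∈ 𝓞 F` with `c ≠ 0`, `‖c·x + d‖ ≤ δ`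
and `‖c‖ ≤ C_F / δ`, the norm being the sup norm via the two real embeddings. -/
theorem real_quadratic_simultaneous_approximation
    (F : Type*) [Field F] [NumberField F]
    (hdeg : Module.finrank ℚ F = 2)
    (v₀ v₁ : F →+* ℝ) (hv : v₀ ≠ v₁) :
    ∃ C_F : ℝ, 0 < C_F ∧
      ∀ x : ℝ × ℝ, ∀ δ : ℝ, 0 < δ → δ < 1 →
        ∃ c d : 𝓞 F, c ≠ 0 ∧
          max |v₀ (c : F) * x.1 + v₀ (d : F)| |v₁ (c : F) * x.2 + v₁ (d : F)| ≤ δ ∧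
          max |v₀ (c : F)| |v₁ (c : F)| ≤ C_F / δ :=
  real_quadratic_simultaneous_approximation_general F v₀ v₁ hv
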